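/- Let M be the free monoid on two generators S, T acting on the set E of 12 tuples (ε_1,ε_2,ε_3;k) with ε_j ∈ {±1}, k ∈ {1,2,3}, such that exactly one index j ≠ k has ε_j ≠ ε_k, where the actions are: S fixes the signs except negating ε_k and ε_s and swaps the roles k ↦ s (with s the unique index j ≠ k with ε_j ≠ ε_k), and T negates ε_t and sets the new distinguished index to t (with t the unique index j ≠ k with ε_j = ε_k), relabeling so that afterwards the new s equals the old k. Then the quotient monoid of M acting faithfully on E is a group isomorphic to the dihedral group D_6 of order 12; in particular S̄² = T̄⁶ = (S̄T̄)² = id. -/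

import Mathlib

noncomputable section

/-- A sign state: a triple of signs (values in `{±1}` ⊆ ℤ) together with a distinguished
index `k`. -/
abbrev SignState := (Fin 3 → ℤ) × Fin 3

/-- A state is good if all entries are `±1` and exactly one of the two indices other than
the distinguished index `k` carries a sign different from that of `k`. -/
def goodState (e : SignState) : Prop :=
  (∀ j, e.1 j = 1 ∨ e.1 j = -1) ∧
  ((e.1 (e.2 + 1) = e.1 e.2) ↔ ¬ (e.1 (e.2 + 2) = e.1 e.2))

/-- The set `E` of the 12 good sign states. -/
def EState : Type := {e : SignState // goodState e}

/-- The index `s`: the unique index other than `k` whose sign differs from that of `k`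
(for a good state). -/
def sIdx (e : SignState) : Fin 3 :=
  if e.1 (e.2 + 1) = e.1 e.2 then e.2 + 2 else e.2 + 1

/-- The index `t`: the unique index other than `k` whose sign agrees with that of `k`
(for a good state). -/
def tIdx (e : SignState) : Fin 3 :=
  if e.1 (e.2 + 1) = e.1 e.2 then e.2 + 1 else e.2 + 2

/-- The raw `S`-move: negate `ε_k` and `ε_s`, and move the distinguished index to `s`. -/
def Sx (e : SignState) : SignState :=
  (fun j => if j = e.2 ∨ j = sIdx e then -e.1 j else e.1 j, sIdx e)

/-- The raw `T`-move: negate `ε_t` and move the distinguished index to `t`. -/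
def Tx (e : SignState) : SignState :=
  (fun j => if j = tIdx e then -e.1 j else e.1 j, tIdx e)

open Classical in
/-- The `S`-move as an endomorphism of the set of good states. -/
def SE : Function.End EState := fun e =>
  if h : goodState (Sx e.1) then ⟨Sx e.1, h⟩ else e

open Classical in
/-- The `T`-move as an endomorphism of the set of good states. -/
def TE : Function.End EState := fun e =>
  if h : goodState (Tx e.1) then ⟨Tx e.1, h⟩ else e

/-!
Checking the 12 good states one by one shows `S² = T⁶ = (ST)² = 1`, so `r ↦ T`, `sr 0 ↦ S`
defines a homomorphism `D₆ → End E` whose image is the monoid generated by `S` and `T`. It is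
injective because the 12 images of the state `(1, 1, -1; 0)` are pairwise distinct: `D₆` acts
simply transitively on `E`.
-/

section DihedralLift

variable {M : Type*} [Monoid M] {n : ℕ} [NeZero n] {s t : M}

theorem pow_val_add_of_pow_eq_one (ht : t ^ n = 1) (i j : ZMod n) :
    t ^ (i + j).val = t ^ i.val * t ^ j.val := by
  rw [ZMod.val_add, ← pow_eq_pow_mod _ ht, pow_add]

theorem pow_mul_mul_pow_of_dihedral (hs : s * s = 1) (hst : s * t * (s * t) = 1) (k : ℕ) :
    t ^ k * s * t ^ k = s := by
  have hts : t * s * t = s := by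
    calc t * s * t = s * (s * t * (s * t)) := by simp only [← mul_assoc, hs, one_mul]
      _ = s := by rw [hst, mul_one]
  induction k with
  | zero => rw [pow_zero, one_mul, mul_one]
  | succ k ih =>
    calc t ^ (k + 1) * s * t ^ (k + 1) = t * t ^ k * s * (t ^ k * t) := by
          rw [← pow_succ', ← pow_succ]
      _ = t * (t ^ k * s * t ^ k) * t := by simp only [mul_assoc]
      _ = s := by rw [ih, hts]

namespace DihedralGroup

def lift (hs : s * s = 1) (ht : t ^ n = 1) (hst : s * t * (s * t) = 1) :
    DihedralGroup n →* M where
  toFun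
    | r i => t ^ i.val
    | sr i => s * t ^ i.val
  map_one' := show t ^ (0 : ZMod n).val = 1 by rw [ZMod.val_zero, pow_zero]
  map_mul' x y := by
    have factor (i j : ZMod n) : t ^ j.val = t ^ i.val * t ^ (j - i).val := by
      rw [← pow_val_add_of_pow_eq_one ht, add_sub_cancel]
    have conj := pow_mul_mul_pow_of_dihedral hs hst
    rcases x with i | i <;> rcases y with j | j
    · exact pow_val_add_of_pow_eq_one ht i j
    · show s * t ^ (j - i).val = t ^ i.val * (s * t ^ j.val)
      rw [factor i j]
      simp only [← mul_assoc]
      rw [conj]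
    · show s * t ^ (i + j).val = s * t ^ i.val * t ^ j.val
      rw [pow_val_add_of_pow_eq_one ht, mul_assoc]
    · show t ^ (j - i).val = s * t ^ i.val * (s * t ^ j.val)
      rw [factor i j]
      simp only [← mul_assoc]
      rw [mul_assoc s, mul_assoc s, conj, hs, one_mul]

variable (hs : s * s = 1) (ht : t ^ n = 1) (hst : s * t * (s * t) = 1)

@[simp]
theorem lift_r (i : ZMod n) : lift hs ht hst (r i) = t ^ i.val := rfl

@[simp]
theorem lift_sr (i : ZMod n) : lift hs ht hst (sr i) = s * t ^ i.val := rfl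

theorem mrange_lift : MonoidHom.mrange (lift hs ht hst) = Submonoid.closure {s, t} := by
  have hs_mem : s ∈ Submonoid.closure {s, t} := Submonoid.subset_closure (by simp)
  have ht_mem : t ∈ Submonoid.closure {s, t} := Submonoid.subset_closure (by simp)
  apply le_antisymm
  · rintro _ ⟨i | i, rfl⟩
    · exact pow_mem ht_mem _
    · exact mul_mem hs_mem (pow_mem ht_mem _)
  · rw [Submonoid.closure_le]
    rintro x (rfl | rfl)
    · exact ⟨sr 0, by simp [ZMod.val_zero]⟩
    · refine ⟨r 1, ?_⟩
      rw [lift_r, ZMod.val_one_eq_one_mod, ← pow_eq_pow_mod _ ht, pow_one]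

end DihedralGroup

end DihedralLift

instance : DecidablePred goodState := fun e => by unfold goodState; infer_instance

theorem forall_goodState {P : SignState → Prop}
    (h : ∀ a b c : ℤ, (a = 1 ∨ a = -1) → (b = 1 ∨ b = -1) → (c = 1 ∨ c = -1) →
      ∀ k, goodState (![a, b, c], k) → P (![a, b, c], k)) :
    ∀ e, goodState e → P e := by
  rintro ⟨f, k⟩ he
  have hf : f = ![f 0, f 1, f 2] := by funext j; fin_cases j <;> rfl
  rw [hf] at he ⊢
  exact h _ _ _ (he.1 0) (he.1 1) (he.1 2) k he

theorem goodState_Sx : ∀ e, goodState e → goodState (Sx e) :=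
  forall_goodState (by rintro a b c (rfl | rfl) (rfl | rfl) (rfl | rfl) <;> decide)

theorem goodState_Tx : ∀ e, goodState e → goodState (Tx e) :=
  forall_goodState (by rintro a b c (rfl | rfl) (rfl | rfl) (rfl | rfl) <;> decide)

theorem Sx_Sx : ∀ e, goodState e → Sx (Sx e) = e :=
  forall_goodState (by rintro a b c (rfl | rfl) (rfl | rfl) (rfl | rfl) <;> decide)

theorem Tx_iterate_six : ∀ e, goodState e → Tx^[6] e = e :=
  forall_goodState (by rintro a b c (rfl | rfl) (rfl | rfl) (rfl | rfl) <;> decide)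

theorem Sx_Tx_Sx_Tx : ∀ e, goodState e → Sx (Tx (Sx (Tx e))) = e :=
  forall_goodState (by rintro a b c (rfl | rfl) (rfl | rfl) (rfl | rfl) <;> decide)

theorem SE_val (e : EState) : (SE e).1 = Sx e.1 :=
  congrArg Subtype.val (dif_pos (goodState_Sx e.1 e.2))

theorem TE_val (e : EState) : (TE e).1 = Tx e.1 :=
  congrArg Subtype.val (dif_pos (goodState_Tx e.1 e.2))

theorem TE_pow_val (n : ℕ) (e : EState) : ((TE ^ n : Function.End EState) e).1 = Tx^[n] e.1 := by
  induction n generalizing e with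
  | zero => rfl
  | succ n ih => exact (ih (TE e)).trans (congrArg _ (TE_val e))

theorem SE_mul_self : SE * SE = 1 :=
  funext fun e => Subtype.ext <| by
    show (SE (SE e)).1 = e.1
    rw [SE_val, SE_val, Sx_Sx e.1 e.2]

theorem TE_pow_six : TE ^ 6 = 1 :=
  funext fun e => Subtype.ext <| by rw [TE_pow_val, Tx_iterate_six e.1 e.2]; rfl

theorem SE_mul_TE_mul_self : SE * TE * (SE * TE) = 1 :=
  funext fun e => Subtype.ext <| by
    show (SE (TE (SE (TE e)))).1 = e.1
    rw [SE_val, TE_val, SE_val, TE_val, Sx_Tx_Sx_Tx e.1 e.2]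

def moves : DihedralGroup 6 →* Function.End EState :=
  DihedralGroup.lift SE_mul_self TE_pow_six SE_mul_TE_mul_self

def baseState : EState := ⟨(![1, 1, -1], 0), by decide⟩

def orbitOfBase : DihedralGroup 6 → SignState
  | .r i => Tx^[i.val] baseState.1
  | .sr i => Sx (Tx^[i.val] baseState.1)

theorem orbitOfBase_injective : Function.Injective orbitOfBase := by decide

theorem moves_apply_baseState (x : DihedralGroup 6) : (moves x baseState).1 = orbitOfBase x := by
  rcases x with i | i
  · exact TE_pow_val i.val baseState
  · show (SE ((TE ^ i.val : Function.End EState) baseState)).1 = _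
    rw [SE_val, TE_pow_val]
    rfl

theorem moves_injective : Function.Injective moves := fun x y h =>
  orbitOfBase_injective <| by rw [← moves_apply_baseState, ← moves_apply_baseState, h]

/-- The quotient `M/∼` is realised as the submonoid of `Function.End EState` generated by the
two moves. -/
theorem quotient_monoid_is_dihedral :
    Nonempty ((Submonoid.closure {SE, TE} : Submonoid (Function.End EState)) ≃*
      DihedralGroup 6) ∧
    SE * SE = 1 ∧ TE ^ 6 = 1 ∧ (SE * TE) * (SE * TE) = 1 := by
  refine ⟨⟨?_⟩, SE_mul_self, TE_pow_six, SE_mul_TE_mul_self⟩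
  have hrange : MonoidHom.mrange moves = Submonoid.closure {SE, TE} :=
    DihedralGroup.mrange_lift _ _ _
  exact (MulEquiv.submonoidCongr hrange).symm.trans
    (MulEquiv.ofLeftInverse' moves (Function.leftInverse_invFun moves_injective)).symm
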